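/- arXiv:2001.08597 — 2 statements merged into one kernel-verified Lean document; each statement's English description precedes it below -/
import Mathlib

section
/- Let q0 > 0, let q₊, q₋ ∈ ℂ with |q₊| = |q₋| = q0, let Q± be the 2×2 complex matrices with rows (0, q±) and (−conj(q±), 0), and let z ∈ ℂ, z ≠ 0. Let A, B, Â, B̂, S, Ŝ be 2×2 complex matrices with B and B̂ invertible, A = B·S, Â = B̂·Ŝ, A = −(i/z)·Â·σ3·Q₊, and B = −(i/z)·B̂·σ3·Q₋. Then σ3·Q₋ is invertible and S = (σ3 Q₋)⁻¹ · Ŝ · σ3 Q₊. (This is the symmetry S(z) = (σ3 Q₋)⁻¹ S(−q0²/z) σ3 Q₊, with A, B the Jost matrices at z and Â, B̂ the Jost matrices at −q0²/z.) -/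
/-! With `c = −i/z ≠ 0`, substituting `A = c B̂ Ŝ σ3 Q₊` and `B = c B̂ σ3 Q₋` into `A = B S`
gives `c B̂ (σ3 Q₋ S) = c B̂ (Ŝ σ3 Q₊)`. Cancelling `c` and the invertible `B̂` leaves
`σ3 Q₋ S = Ŝ σ3 Q₊`, and `σ3 Q₋ = c⁻¹ B̂⁻¹ B` is invertible. -/

open Complex Matrix

/-- The Pauli matrix `σ3 = diag(1, −1)`. -/
def σ3 : Matrix (Fin 2) (Fin 2) ℂ := !![1, 0; 0, -1]

section UnitSMul

variable {G R : Type*} [Group G] [Monoid R] [MulAction G R] [IsScalarTower G R R]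

theorem isUnit_of_eq_smul_mul [SMulCommClass G R R] {g : G} {B X M : R} (hB : IsUnit B)
    (hX : IsUnit X) (h : B = g • (X * M)) : IsUnit M := by
  rw [h, isUnit_smul_iff, ← hX.unit_spec] at hB
  exact (Units.isUnit_units_mul _ M).mp hB

theorem mul_eq_mul_of_eq_smul_mul {g : G} {A B Ah Bh S Sh M P : R} (hBh : IsUnit Bh)
    (hA : A = B * S) (hAh : Ah = Bh * Sh) (h1 : A = g • (Ah * P)) (h2 : B = g • (Bh * M)) :
    M * S = Sh * P := by
  have h : g • (Bh * (M * S)) = g • (Bh * (Sh * P)) := by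
    rw [← mul_assoc, ← mul_assoc, ← smul_mul_assoc, ← h2, ← hAh, ← h1, hA]
  exact hBh.mul_left_cancel ((smul_left_cancel_iff g).mp h)

end UnitSMul

theorem Matrix.eq_nonsing_inv_mul_mul_of_mul_eq {n : Type*} [Fintype n] [DecidableEq n]
    {K : Type*} [CommRing K] {M S T P : Matrix n n K} (hM : IsUnit M) (h : M * S = T * P) :
    S = M⁻¹ * T * P := by
  rw [mul_assoc, ← h, nonsing_inv_mul_cancel_left _ _ ((isUnit_iff_isUnit_det M).mp hM)]

theorem stmt_11_general
    (Qp Qm : Matrix (Fin 2) (Fin 2) ℂ)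
    (z : ℂ) (hz : z ≠ 0)
    (A B Ah Bh S Sh : Matrix (Fin 2) (Fin 2) ℂ)
    (hB : IsUnit B) (hBh : IsUnit Bh)
    (hA : A = B * S) (hAh : Ah = Bh * Sh)
    (h1 : A = (-(I / z)) • (Ah * (σ3 * Qp)))
    (h2 : B = (-(I / z)) • (Bh * (σ3 * Qm))) :
    IsUnit (σ3 * Qm) ∧ S = (σ3 * Qm)⁻¹ * Sh * (σ3 * Qp) := by
  rw [← Units.smul_mk0 (by simp [I_ne_zero, hz] : -(I / z) ≠ 0)] at h1 h2
  have hM : IsUnit (σ3 * Qm) := isUnit_of_eq_smul_mul hB hBh h2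
  exact ⟨hM, eq_nonsing_inv_mul_mul_of_mul_eq hM (mul_eq_mul_of_eq_smul_mul hBh hA hAh h1 h2)⟩

theorem stmt_11 (q0 : ℝ) (hq0 : 0 < q0)
    (qp qm : ℂ) (hqp : ‖qp‖ = q0) (hqm : ‖qm‖ = q0)
    (Qp Qm : Matrix (Fin 2) (Fin 2) ℂ)
    (hQp : Qp = !![0, qp; -(starRingEnd ℂ qp), 0])
    (hQm : Qm = !![0, qm; -(starRingEnd ℂ qm), 0])
    (z : ℂ) (hz : z ≠ 0)
    (A B Ah Bh S Sh : Matrix (Fin 2) (Fin 2) ℂ)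
    (hB : IsUnit B) (hBh : IsUnit Bh)
    (hA : A = B * S) (hAh : Ah = Bh * Sh)
    (h1 : A = (-(I / z)) • (Ah * (σ3 * Qp)))
    (h2 : B = (-(I / z)) • (Bh * (σ3 * Qm))) :
    IsUnit (σ3 * Qm) ∧ S = (σ3 * Qm)⁻¹ * Sh * (σ3 * Qp) :=
  stmt_11_general Qp Qm z hz A B Ah Bh S Sh hB hBh hA hAh h1 h2
end

section
/- Let U : ℝ → Matrix (Fin 2) (Fin 2) ℂ be continuous, and let u, v : ℝ → ℂ² be differentiable solutions of the linear system y'(x) = U(x)·y(x). Suppose there exists x₀ ∈ ℝ with v(x₀) ≠ 0 and Wr(u(x₀), v(x₀)) = 0. Then there exists a constant c ∈ ℂ such that u(x) = c·v(x) for all x ∈ ℝ. -/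
/-!
A vanishing Wronskian at `x0` with `v x0 ≠ 0` makes `u x0` a multiple `c • v x0`. Then `u` and
`c • v` solve the same linear system with the same value at `x0`; since the coefficient matrix is
continuous, it is bounded on every compact interval, so the system is Lipschitz there and
uniqueness of solutions (Grönwall) gives `u = c • v` everywhere.
-/

open Matrix Set

/-- The Wronskian of two vectors in ℂ²: `Wr(u,v) = u1 v2 − u2 v1`. -/
def Wr (u v : Fin 2 → ℂ) : ℂ := u 0 * v 1 - u 1 * v 0

theorem exists_eq_smul_of_Wr_eq_zero {u v : Fin 2 → ℂ} (hv : v ≠ 0) (hW : Wr u v = 0) :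
    ∃ c : ℂ, u = c • v := by
  have hcross : u 0 * v 1 = u 1 * v 0 := sub_eq_zero.1 hW
  obtain h0 | h1 : v 0 ≠ 0 ∨ v 1 ≠ 0 := by
    by_contra! h
    exact hv (funext fun i => by fin_cases i <;> simp [h.1, h.2])
  · refine ⟨u 0 / v 0, funext fun i => ?_⟩
    fin_cases i
    · simp [h0]
    · simp only [Fin.mk_one, Fin.isValue, Pi.smul_apply, smul_eq_mul]
      field_simp
      exact hcross.symm
  · refine ⟨u 1 / v 1, funext fun i => ?_⟩
    fin_cases i
    · simp only [Fin.zero_eta, Fin.isValue, Pi.smul_apply, smul_eq_mul]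
      field_simp
      exact hcross
    · simp [h1]

theorem ODE_solution_unique_of_continuous_linear {𝕜 E : Type*} [NontriviallyNormedField 𝕜]
    [NormedAddCommGroup E] [NormedSpace 𝕜 E] [NormedSpace ℝ E]
    {A : ℝ → E →L[𝕜] E} (hA : Continuous A) {f g : ℝ → E} {t₀ : ℝ}
    (hf : ∀ t, HasDerivAt f (A t (f t)) t) (hg : ∀ t, HasDerivAt g (A t (g t)) t)
    (heq : f t₀ = g t₀) : f = g := by
  funext t
  set a := min t t₀ - 1
  set b := max t t₀ + 1
  have ht : t ∈ Ioo a b := ⟨by grind, by grind⟩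
  have ht₀ : t₀ ∈ Ioo a b := ⟨by grind, by grind⟩
  obtain ⟨C, hC⟩ := (isCompact_Icc (a := a) (b := b)).exists_bound_of_continuousOn hA.continuousOn
  have hlip (s : ℝ) (hs : s ∈ Ioo a b) : LipschitzOnWith C.toNNReal (A s) univ :=
    ((A s).lipschitz.weaken <| by
      rw [← NNReal.coe_le_coe, Real.coe_toNNReal']
      exact (hC s (Ioo_subset_Icc_self hs)).trans (le_max_left _ _)).lipschitzOnWith
  exact ODE_solution_unique_of_mem_Ioo (v := fun s x => A s x) hlip ht₀
    (fun s _ => ⟨hf s, mem_univ _⟩) (fun s _ => ⟨hg s, mem_univ _⟩) heq ht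

theorem Matrix.ODE_solution_unique_mulVec {n 𝕜 : Type*} [Fintype n] [DecidableEq n] [RCLike 𝕜]
    {U : ℝ → Matrix n n 𝕜} (hU : Continuous U) {f g : ℝ → n → 𝕜} {t₀ : ℝ}
    (hf : ∀ t, HasDerivAt f (U t *ᵥ f t) t) (hg : ∀ t, HasDerivAt g (U t *ᵥ g t) t)
    (heq : f t₀ = g t₀) : f = g := by
  let toCLM : Matrix n n 𝕜 →ₗ[𝕜] (n → 𝕜) →L[𝕜] n → 𝕜 :=
    LinearMap.toContinuousLinearMap.toLinearMap ∘ₗ Matrix.toLin'.toLinearMap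
  exact ODE_solution_unique_of_continuous_linear
    (toCLM.continuous_of_finiteDimensional.comp hU) hf hg heq

theorem stmt_15 (U : ℝ → Matrix (Fin 2) (Fin 2) ℂ) (hU : Continuous U)
    (u v : ℝ → Fin 2 → ℂ)
    (hu : ∀ x i, HasDerivAt (fun y => u y i) ((U x).mulVec (u x) i) x)
    (hv : ∀ x i, HasDerivAt (fun y => v y i) ((U x).mulVec (v x) i) x)
    (x0 : ℝ) (hv0 : v x0 ≠ 0) (hW : Wr (u x0) (v x0) = 0) :
    ∃ c : ℂ, ∀ x, u x = c • v x := by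
  obtain ⟨c, hc⟩ := exists_eq_smul_of_Wr_eq_zero hv0 hW
  have hu' (x : ℝ) : HasDerivAt u (U x *ᵥ u x) x := hasDerivAt_pi.2 (hu x)
  have hcv (x : ℝ) : HasDerivAt (c • v) (U x *ᵥ (c • v) x) x := by
    rw [Pi.smul_apply, mulVec_smul]
    exact (hasDerivAt_pi.2 (hv x)).const_smul c
  exact ⟨c, congrFun (ODE_solution_unique_mulVec hU hu' hcv hc)⟩
end
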